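/- arXiv:math/0209290 — 2 statements merged into one kernel-verified Lean document; each statement's English description precedes it below -/
import Mathlib

section
/- Let γ = −H ω₃ with H = f_{xy}/(f_x f_y), ω₁ = −f_x dx, ω₂ = −f_y dy, ω₃ = df. Then the second structure equation dγ = K ω₁ ∧ ω₂ holds, where K = ∂₁(H) − ∂₂(H) with ∂₁ = −(1/f_x)∂_x and ∂₂ = −(1/f_y)∂_y. -/
/-!
Since `γ = -H df` and `d(df) = 0` by symmetry of second derivatives, `dγ = -dH ∧ df`.
Writing `H_x = -f_x ∂₁H` and `H_y = -f_y ∂₂H` gives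
`dH ∧ df = (H_x f_y - H_y f_x) dx ∧ dy = -(∂₁H - ∂₂H) f_x f_y dx ∧ dy = -K ω₁ ∧ ω₂`.
-/

noncomputable def px (f : ℝ × ℝ → ℝ) (z : ℝ × ℝ) : ℝ := fderiv ℝ f z (1, 0)
noncomputable def py (f : ℝ × ℝ → ℝ) (z : ℝ × ℝ) : ℝ := fderiv ℝ f z (0, 1)
noncomputable def d1 (f g : ℝ × ℝ → ℝ) (z : ℝ × ℝ) : ℝ := -(px g z) / px f z
noncomputable def d2 (f g : ℝ × ℝ → ℝ) (z : ℝ × ℝ) : ℝ := -(py g z) / py f z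

noncomputable def Hfun (f : ℝ × ℝ → ℝ) (z : ℝ × ℝ) : ℝ :=
  px (py f) z / (px f z * py f z)

noncomputable def w1 (f : ℝ × ℝ → ℝ) (z : ℝ × ℝ) : ℝ × ℝ := (-(px f z), 0)
noncomputable def w2 (f : ℝ × ℝ → ℝ) (z : ℝ × ℝ) : ℝ × ℝ := (0, -(py f z))

/-- `γ = -H ω₃ = -H df`. -/
noncomputable def gam (f : ℝ × ℝ → ℝ) (z : ℝ × ℝ) : ℝ × ℝ :=
  (-(Hfun f z) * px f z, -(Hfun f z) * py f z)

noncomputable def curl (ω : ℝ × ℝ → ℝ × ℝ) (z : ℝ × ℝ) : ℝ :=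
  px (fun w => (ω w).2) z - py (fun w => (ω w).1) z

def wedge (a b : ℝ × ℝ) : ℝ := a.1 * b.2 - a.2 * b.1

section

variable {f g h : ℝ × ℝ → ℝ} {z : ℝ × ℝ} {m n : WithTop ℕ∞}

lemma ContDiffAt.px (hf : ContDiffAt ℝ n f z) (hmn : m + 1 ≤ n) : ContDiffAt ℝ m (px f) z :=
  (hf.fderiv_right hmn).clm_apply contDiffAt_const

lemma ContDiffAt.py (hf : ContDiffAt ℝ n f z) (hmn : m + 1 ≤ n) : ContDiffAt ℝ m (py f) z :=
  (hf.fderiv_right hmn).clm_apply contDiffAt_const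

lemma fderiv_fderiv_apply_const (hf : DifferentiableAt ℝ (fderiv ℝ f) z) (u v : ℝ × ℝ) :
    fderiv ℝ (fun w => fderiv ℝ f w v) z u = fderiv ℝ (fderiv ℝ f) z u v := by
  rw [fderiv_clm_apply hf (differentiableAt_const v)]
  simp

lemma px_py_eq_py_px (hf : ContDiffAt ℝ 2 f z) : px (py f) z = py (px f) z := by
  have hsymm : IsSymmSndFDerivAt ℝ f z := hf.isSymmSndFDerivAt (by simp)
  have hdf : DifferentiableAt ℝ (fderiv ℝ f) z :=
    (hf.fderiv_right (m := 1) (by norm_num)).differentiableAt one_ne_zero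
  change fderiv ℝ (fun w => fderiv ℝ f w (0, 1)) z (1, 0) =
    fderiv ℝ (fun w => fderiv ℝ f w (1, 0)) z (0, 1)
  rw [fderiv_fderiv_apply_const hdf, fderiv_fderiv_apply_const hdf, hsymm]

lemma px_mul (hg : DifferentiableAt ℝ g z) (hh : DifferentiableAt ℝ h z) :
    px (fun w => g w * h w) z = g z * px h z + h z * px g z := by
  simp [px, fderiv_fun_mul hg hh]

lemma py_mul (hg : DifferentiableAt ℝ g z) (hh : DifferentiableAt ℝ h z) :
    py (fun w => g w * h w) z = g z * py h z + h z * py g z := by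
  simp [py, fderiv_fun_mul hg hh]

lemma px_neg : px (fun w => -g w) z = -px g z := by
  simp [px, fderiv_fun_neg]

lemma py_neg : py (fun w => -g w) z = -py g z := by
  simp [py, fderiv_fun_neg]

lemma differentiableAt_Hfun (hf : ContDiffAt ℝ 3 f z) (hfx : px f z ≠ 0) (hfy : py f z ≠ 0) :
    DifferentiableAt ℝ (Hfun f) z := by
  have hfxy : DifferentiableAt ℝ (px (py f)) z :=
    ((hf.py (m := 2) (by norm_num)).px (m := 1) (by norm_num)).differentiableAt one_ne_zero
  have hx : DifferentiableAt ℝ (px f) z :=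
    (hf.px (m := 1) (by norm_num)).differentiableAt one_ne_zero
  have hy : DifferentiableAt ℝ (py f) z :=
    (hf.py (m := 1) (by norm_num)).differentiableAt one_ne_zero
  change DifferentiableAt ℝ (fun w => px (py f) w / (px f w * py f w)) z
  simpa only [div_eq_mul_inv] using hfxy.fun_mul ((hx.fun_mul hy).fun_inv (mul_ne_zero hfx hfy))

lemma curl_mul_grad (hg : DifferentiableAt ℝ g z) (hf : ContDiffAt ℝ 2 f z) :
    curl (fun w => (g w * px f w, g w * py f w)) z =
      wedge (px g z, py g z) (px f z, py f z) := by
  have hx : DifferentiableAt ℝ (px f) z :=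
    (hf.px (m := 1) (by norm_num)).differentiableAt one_ne_zero
  have hy : DifferentiableAt ℝ (py f) z :=
    (hf.py (m := 1) (by norm_num)).differentiableAt one_ne_zero
  simp only [curl, wedge]
  rw [px_mul hg hy, py_mul hg hx, px_py_eq_py_px hf]
  ring

end

/-- the second structure equation `dγ = K ω₁ ∧ ω₂` with
`K = ∂₁(H) - ∂₂(H)`. -/
theorem stmt_6 (U : Set (ℝ × ℝ)) (hU : IsOpen U) (f : ℝ × ℝ → ℝ)
    (hf : ContDiffOn ℝ (⊤ : ℕ∞) f U)
    (hfx : ∀ z ∈ U, px f z ≠ 0) (hfy : ∀ z ∈ U, py f z ≠ 0) :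
    ∀ z ∈ U,
      curl (gam f) z =
        (d1 f (Hfun f) z - d2 f (Hfun f) z) * wedge (w1 f z) (w2 f z) := by
  intro z hz
  have hf3 : ContDiffAt ℝ 3 f z :=
    (hf.contDiffAt (hU.mem_nhds hz)).of_le (WithTop.coe_le_coe.mpr le_top)
  have hH := differentiableAt_Hfun hf3 (hfx z hz) (hfy z hz)
  have hdγ : curl (gam f) z = wedge (-px (Hfun f) z, -py (Hfun f) z) (px f z, py f z) := by
    rw [← px_neg, ← py_neg]
    exact curl_mul_grad hH.neg (hf3.of_le (by norm_num))
  rw [hdγ]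
  simp only [d1, d2, wedge, w1, w2]
  field_simp [hfx z hz, hfy z hz]
  ring
end

section
/- With δ-operators as above ([∂₁,∂₂] = H(∂₂−∂₁), δ_i⁽ᵏ⁾(u) = ∂_i(u) − kHu), define à_{ijk} = δ_k⁽²⁾ ∘ δ_j⁽¹⁾ ∘ δ_i⁽⁰⁾(a) for a smooth function a. Then à_{ij k} is symmetric in (i,j), and setting a₁₁₂ = (à₁₁₂ + à₁₂₁ + à₂₁₁)/3 and K = ∂₁H − ∂₂H, a₁ = ∂₁a, one has à₁₁₂ = a₁₁₂ + (2K/3)·a₁ and à₁₂₁ = à₂₁₁ = a₁₁₂ − (K/3)·a₁. -/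
noncomputable def vd (X : ℝ × ℝ → ℝ × ℝ) (g : ℝ × ℝ → ℝ) (z : ℝ × ℝ) : ℝ :=
  fderiv ℝ g z (X z)

noncomputable def delk (X : ℝ × ℝ → ℝ × ℝ) (H : ℝ × ℝ → ℝ) (k : ℕ)
    (u : ℝ × ℝ → ℝ) (z : ℝ × ℝ) : ℝ :=
  vd X u z - (k : ℝ) * H z * u z

/-- `Ã_{ijk} = δ_k⁽²⁾ ∘ δ_j⁽¹⁾ ∘ δ_i⁽⁰⁾(a)`. -/
noncomputable def atil (X1 X2 : ℝ × ℝ → ℝ × ℝ) (H a : ℝ × ℝ → ℝ)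
    (i j k : Fin 2) (z : ℝ × ℝ) : ℝ :=
  let Xf : Fin 2 → ℝ × ℝ → ℝ × ℝ := ![X1, X2]
  delk (Xf k) H 2 (delk (Xf j) H 1 (delk (Xf i) H 0 a)) z

/-! Both claims come from the commutator identity
`δ₂⁽ˢ⁺¹⁾ δ₁⁽ˢ⁾ u - δ₁⁽ˢ⁺¹⁾ δ₂⁽ˢ⁾ u = s K u`: expanding with the Leibniz rule, the first-order
terms add up to `H (∂₂u - ∂₁u)`, which cancels the bracket term `[∂₂, ∂₁] u`, and what is left
is `s (∂₁H - ∂₂H) u`. For `s = 0` the inner operators of `Ã_{ijk}` commute, which gives the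
symmetry in `(i, j)`; for `s = 1` and `u = ∂₁a` it gives `Ã₁₁₂ - Ã₁₂₁ = K a₁`, and the formulas
follow by linear algebra. -/

section DeltaOperator

variable {U : Set (ℝ × ℝ)} {X Y X1 X2 : ℝ × ℝ → ℝ × ℝ} {H u v : ℝ × ℝ → ℝ} {z : ℝ × ℝ}

theorem ContDiffOn.vd (hU : IsOpen U) (hu : ContDiffOn ℝ (⊤ : ℕ∞) u U)
    (hX : ContDiffOn ℝ (⊤ : ℕ∞) X U) : ContDiffOn ℝ (⊤ : ℕ∞) (vd X u) U :=
  (hu.fderiv_of_isOpen hU (by exact_mod_cast le_top)).clm_apply hX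

theorem vd_fun_sub (hu : DifferentiableAt ℝ u z) (hv : DifferentiableAt ℝ v z) :
    vd X (fun w => u w - v w) z = vd X u z - vd X v z := by
  simp [vd, fderiv_fun_sub hu hv]

theorem vd_const_mul (c : ℝ) (hu : DifferentiableAt ℝ u z) :
    vd X (fun w => c * u w) z = c * vd X u z := by
  simp [vd, fderiv_const_mul hu]

theorem vd_fun_mul (hu : DifferentiableAt ℝ u z) (hv : DifferentiableAt ℝ v z) :
    vd X (fun w => u w * v w) z = vd X u z * v z + u z * vd X v z := by
  simp only [vd, fderiv_fun_mul hu hv, add_apply, smul_apply, smul_eq_mul]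
  ring

theorem vd_congr_of_eqOn (hU : IsOpen U) (hz : z ∈ U) (h : Set.EqOn u v U) :
    vd X u z = vd X v z := by
  rw [vd, vd, (Filter.eventuallyEq_of_mem (hU.mem_nhds hz) h).fderiv_eq]

theorem delk_zero : delk X H 0 u = vd X u := by
  funext w
  simp [delk]

theorem delk_congr_of_eqOn (hU : IsOpen U) (hz : z ∈ U) (h : Set.EqOn u v U) (k : ℕ) :
    delk X H k u z = delk X H k v z := by
  rw [delk, delk, h hz, vd_congr_of_eqOn hU hz h]

theorem vd_delk (k : ℕ) (hH : DifferentiableAt ℝ H z) (hu : DifferentiableAt ℝ u z)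
    (hXu : DifferentiableAt ℝ (vd X u) z) :
    vd Y (delk X H k u) z = vd Y (vd X u) z - k * (vd Y H z * u z + H z * vd Y u z) := by
  have hdelk : delk X H k u = fun w => vd X u w - k * (H w * u w) := by
    funext w
    rw [delk, mul_assoc]
  rw [hdelk, vd_fun_sub hXu ((hH.fun_mul hu).const_mul _), vd_const_mul _ (hH.fun_mul hu),
    vd_fun_mul hH hu]

theorem delk_succ_delk_comm (s : ℕ) (hH : DifferentiableAt ℝ H z)
    (hu : DifferentiableAt ℝ u z) (h1u : DifferentiableAt ℝ (vd X1 u) z)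
    (h2u : DifferentiableAt ℝ (vd X2 u) z)
    (hbr : vd X1 (vd X2 u) z - vd X2 (vd X1 u) z = H z * (vd X2 u z - vd X1 u z)) :
    delk X2 H (s + 1) (delk X1 H s u) z - delk X1 H (s + 1) (delk X2 H s u) z =
      s * (vd X1 H z - vd X2 H z) * u z := by
  rw [delk.eq_1 X2 H (s + 1), delk.eq_1 X1 H (s + 1), vd_delk s hH hu h1u,
    vd_delk s hH hu h2u, delk.eq_1 X1 H s u z, delk.eq_1 X2 H s u z]
  push_cast
  linear_combination -hbr

end DeltaOperator

theorem atil_swap {U : Set (ℝ × ℝ)} (hU : IsOpen U) {X1 X2 : ℝ × ℝ → ℝ × ℝ}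
    {H a : ℝ × ℝ → ℝ}
    (h : Set.EqOn (delk X2 H 1 (delk X1 H 0 a)) (delk X1 H 1 (delk X2 H 0 a)) U)
    (i j k : Fin 2) {z : ℝ × ℝ} (hz : z ∈ U) :
    atil X1 X2 H a i j k z = atil X1 X2 H a j i k z := by
  fin_cases i <;> fin_cases j <;> fin_cases k <;>
    simp only [atil, Fin.zero_eta, Fin.mk_one, Matrix.cons_val_zero, Matrix.cons_val_one] <;>
    first
      | rfl
      | exact delk_congr_of_eqOn hU hz h 2
      | exact delk_congr_of_eqOn hU hz h.symm 2

/-- `Ã_{ijk}` is symmetric in `(i,j)`, and with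
`a₁₁₂ = (Ã₁₁₂ + Ã₁₂₁ + Ã₂₁₁)/3`, `K = ∂₁H - ∂₂H`, `a₁ = ∂₁a`, one has
`Ã₁₁₂ = a₁₁₂ + (2K/3) a₁` and `Ã₁₂₁ = Ã₂₁₁ = a₁₁₂ - (K/3) a₁`. -/
theorem stmt_16 (U : Set (ℝ × ℝ)) (hU : IsOpen U)
    (X1 X2 : ℝ × ℝ → ℝ × ℝ) (H a : ℝ × ℝ → ℝ)
    (hX1 : ContDiffOn ℝ (⊤ : ℕ∞) X1 U) (hX2 : ContDiffOn ℝ (⊤ : ℕ∞) X2 U)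
    (hH : ContDiffOn ℝ (⊤ : ℕ∞) H U) (ha : ContDiffOn ℝ (⊤ : ℕ∞) a U)
    -- `[∂₁, ∂₂] = H (∂₂ - ∂₁)`
    (hbr : ∀ g : ℝ × ℝ → ℝ, ContDiffOn ℝ (⊤ : ℕ∞) g U → ∀ z ∈ U,
      vd X1 (vd X2 g) z - vd X2 (vd X1 g) z = H z * (vd X2 g z - vd X1 g z)) :
    (∀ i j k : Fin 2, ∀ z ∈ U,
      atil X1 X2 H a i j k z = atil X1 X2 H a j i k z) ∧
    (∀ z ∈ U,
      atil X1 X2 H a 0 0 1 z =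
        (atil X1 X2 H a 0 0 1 z + atil X1 X2 H a 0 1 0 z + atil X1 X2 H a 1 0 0 z) / 3 +
          (2 * (vd X1 H z - vd X2 H z) / 3) * vd X1 a z) ∧
    (∀ z ∈ U,
      atil X1 X2 H a 0 1 0 z =
        (atil X1 X2 H a 0 0 1 z + atil X1 X2 H a 0 1 0 z + atil X1 X2 H a 1 0 0 z) / 3 -
          ((vd X1 H z - vd X2 H z) / 3) * vd X1 a z ∧
      atil X1 X2 H a 1 0 0 z =
        (atil X1 X2 H a 0 0 1 z + atil X1 X2 H a 0 1 0 z + atil X1 X2 H a 1 0 0 z) / 3 -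
          ((vd X1 H z - vd X2 H z) / 3) * vd X1 a z) := by
  have hdiff : ∀ {g : ℝ × ℝ → ℝ}, ContDiffOn ℝ (⊤ : ℕ∞) g U → ∀ z ∈ U,
      DifferentiableAt ℝ g z := fun hg z hz =>
    (hg.contDiffAt (hU.mem_nhds hz)).differentiableAt (by simp)
  have hcomm : ∀ (s : ℕ) {u : ℝ × ℝ → ℝ}, ContDiffOn ℝ (⊤ : ℕ∞) u U → ∀ z ∈ U,
      delk X2 H (s + 1) (delk X1 H s u) z - delk X1 H (s + 1) (delk X2 H s u) z =
        s * (vd X1 H z - vd X2 H z) * u z := fun s u hu z hz =>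
    delk_succ_delk_comm s (hdiff hH z hz) (hdiff hu z hz) (hdiff (hu.vd hU hX1) z hz)
      (hdiff (hu.vd hU hX2) z hz) (hbr u hu z hz)
  have hsym := atil_swap hU (H := H) (a := a) fun z hz => by
    simpa [sub_eq_zero] using hcomm 0 ha z hz
  have hK : ∀ z ∈ U, atil X1 X2 H a 0 0 1 z - atil X1 X2 H a 0 1 0 z =
      (vd X1 H z - vd X2 H z) * vd X1 a z := fun z hz => by
    simpa [atil, delk_zero] using hcomm 1 (ha.vd hU hX1) z hz
  refine ⟨fun i j k z hz => hsym i j k hz, fun z hz => ?_, fun z hz => ⟨?_, ?_⟩⟩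
  · linear_combination (2 / 3 : ℝ) * hK z hz - (1 / 3 : ℝ) * hsym 1 0 0 hz
  · linear_combination (-1 / 3 : ℝ) * hK z hz - (1 / 3 : ℝ) * hsym 1 0 0 hz
  · linear_combination (-1 / 3 : ℝ) * hK z hz + (2 / 3 : ℝ) * hsym 1 0 0 hz
end
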